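/- arXiv:1503.06161 — 3 statements merged into one kernel-verified Lean document; each statement's English description precedes it below -/
import Mathlib

section
/- Let p be a polynomial of degree n over ℂ with p(0) = 1 that has no zeros in the closed unit disk. Then there exists an n × n complex matrix K with operator norm strictly less than 1 such that p(z) = det(I - z•K) for all z ∈ ℂ. -/
/-!
Since `p(0) = 1`, `p` factors as `∏ (1 - z / rᵢ)` over its roots `rᵢ`, all of which lie outside the
closed unit disk. So `K = diag(1 / rᵢ)` works: its L2 operator norm is `max |1 / rᵢ| < 1`.
-/

open scoped Matrix.Norms.L2Operator

open Polynomial Matrix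

theorem Multiset.exists_eq_map_univ {α : Type*} (s : Multiset α) {n : ℕ} (hn : card s = n) :
    ∃ f : Fin n → α, s = Finset.univ.val.map f := by
  subst hn
  refine ⟨fun i => s.toList.get (i.cast (by simp)), ?_⟩
  rw [Fin.univ_val_map]
  conv_lhs => rw [← Multiset.coe_toList s, ← List.ofFn_get s.toList]
  congr 1
  exact List.ofFn_congr (by simp) _

theorem Polynomial.Splits.eval_eq_prod_one_sub_mul_inv_roots {K : Type*} [Field K] {f : K[X]}
    (hf : f.Splits) (h0 : f.eval 0 = 1) (x : K) :
    f.eval x = (f.roots.map fun r => 1 - x * r⁻¹).prod := by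
  have hroots_ne : ∀ r ∈ f.roots, r ≠ 0 := by
    rintro r hr rfl
    simpa [h0] using isRoot_of_mem_roots hr
  have hlc : f.leadingCoeff * (f.roots.map fun r => -r).prod = 1 := by
    simpa [h0] using (hf.eval_eq_prod_roots 0).symm
  calc f.eval x = f.leadingCoeff * (f.roots.map (x - ·)).prod := hf.eval_eq_prod_roots x
    _ = (f.roots.map (x - ·)).prod * ((f.roots.map fun r => -r).prod)⁻¹ := by
      rw [mul_comm, eq_inv_of_mul_eq_one_left hlc]
    _ = (f.roots.map fun r => 1 - x * r⁻¹).prod := by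
      rw [← Multiset.prod_map_inv, ← Multiset.prod_map_mul]
      refine congrArg Multiset.prod (Multiset.map_congr rfl fun r hr => ?_)
      field_simp [hroots_ne r hr]
      ring

theorem Matrix.det_one_sub_smul_diagonal {ι R : Type*} [Fintype ι] [DecidableEq ι] [CommRing R]
    (z : R) (v : ι → R) : (1 - z • diagonal v).det = ∏ i, (1 - z * v i) := by
  rw [← diagonal_one, ← diagonal_smul, diagonal_sub, det_diagonal]
  rfl

theorem stmt_0 (n : ℕ) (p : Polynomial ℂ) (hdeg : p.natDegree = n)
    (h0 : p.eval 0 = 1) (hstable : ∀ z : ℂ, ‖z‖ ≤ 1 → p.eval z ≠ 0) :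
    ∃ K : Matrix (Fin n) (Fin n) ℂ, ‖K‖ < 1 ∧
      ∀ z : ℂ, p.eval z = (1 - z • K).det := by
  have hsplit : p.Splits := IsAlgClosed.splits p
  obtain ⟨r, hr⟩ := p.roots.exists_eq_map_univ (hsplit.natDegree_eq_card_roots.symm.trans hdeg)
  have hr_outside : ∀ i, 1 < ‖r i‖ := fun i => by
    have hmem : r i ∈ p.roots := hr ▸ Multiset.mem_map_of_mem r (Finset.mem_univ_val i)
    by_contra hle
    exact hstable _ (not_lt.1 hle) (isRoot_of_mem_roots hmem)
  refine ⟨diagonal fun i => (r i)⁻¹, ?_, fun z => ?_⟩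
  · rw [l2_opNorm_diagonal, pi_norm_lt_iff one_pos]
    intro i
    rw [norm_inv]
    exact inv_lt_one_of_one_lt₀ (hr_outside i)
  · rw [det_one_sub_smul_diagonal, hsplit.eval_eq_prod_one_sub_mul_inv_roots h0, hr,
      Multiset.map_map]
    rfl
end

section
/- Let A, B, C, D be complex matrices with D invertible, A× = A - B D⁻¹ C, and Z a square matrix such that I - A Z is invertible. Then det(I - A Z) · det(D + C Z (I - A Z)⁻¹ B) = det(D) · det(I - A× Z). -/
theorem stmt_6 (n m : ℕ)
    (A : Matrix (Fin n) (Fin n) ℂ) (B : Matrix (Fin n) (Fin m) ℂ)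
    (C : Matrix (Fin m) (Fin n) ℂ) (D : Matrix (Fin m) (Fin m) ℂ)
    (hD : IsUnit D) (Z : Matrix (Fin n) (Fin n) ℂ)
    (hAZ : IsUnit (1 - A * Z)) :
    (1 - A * Z).det * (D + C * Z * (1 - A * Z)⁻¹ * B).det =
      D.det * (1 - (A - B * D⁻¹ * C) * Z).det := by
  have iD : Invertible D := hD.invertible
  have iAZ : Invertible (1 - A * Z) := hAZ.invertible
  have h1 := Matrix.det_fromBlocks₁₁ (1 - A * Z) B (-(C * Z)) D
  have h2 := Matrix.det_fromBlocks₂₂ (1 - A * Z) B (-(C * Z)) D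
  rw [Matrix.invOf_eq_nonsing_inv] at h1 h2
  rw [h1] at h2
  have e1 : D - -(C * Z) * (1 - A * Z)⁻¹ * B = D + C * Z * (1 - A * Z)⁻¹ * B := by
    simp only [Matrix.mul_neg, Matrix.neg_mul, sub_neg_eq_add, Matrix.sub_mul, Matrix.mul_assoc]
  have e2 : 1 - A * Z - B * D⁻¹ * -(C * Z) = 1 - (A - B * D⁻¹ * C) * Z := by
    simp only [Matrix.mul_neg, Matrix.neg_mul, sub_neg_eq_add, Matrix.sub_mul, Matrix.mul_assoc]; abel
  rw [e1, e2] at h2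
  exact h2
end

section
/- Let A be a square complex matrix, B a compatible matrix, C, D with D invertible, A× = A - B D⁻¹ C, B× = B D⁻¹. Then for every N ≥ 0, the subspace span ∑_{j=0}^N Range((A×)^j B×) equals span ∑_{j=0}^N Range(A^j B). In particular, the pair (A×, B×) is controllable if and only if (A, B) is controllable. -/
private lemma aux_le (n m : ℕ) (A A' : Matrix (Fin n) (Fin n) ℂ)
    (B B' : Matrix (Fin n) (Fin m) ℂ)
    (M : Matrix (Fin m) (Fin n) ℂ) (U : Matrix (Fin m) (Fin m) ℂ)
    (hA' : A' = A + B * M) (hB' : B' = B * U) (N : ℕ) :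
    (⨆ j ∈ Finset.range (N + 1), LinearMap.range ((A' ^ j * B').mulVecLin)) ≤
      ⨆ j ∈ Finset.range (N + 1), LinearMap.range ((A ^ j * B).mulVecLin) := by
  -- S j := big sup up to j
  set S : ℕ → Submodule ℂ (Fin n → ℂ) :=
    fun N => ⨆ j ∈ Finset.range (N + 1), LinearMap.range ((A ^ j * B).mulVecLin) with hS
  have hmono : Monotone S := by
    intro a b hab
    refine iSup₂_le fun j hj => le_iSup₂_of_le j ?_ le_rfl
    simp only [Finset.mem_range] at hj ⊢; omega
  have hB'le : LinearMap.range B'.mulVecLin ≤ S 0 := by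
    refine le_trans ?_ (le_iSup₂_of_le 0 (by simp) le_rfl)
    rw [hB']
    simp only [pow_zero, Matrix.one_mul, Matrix.mulVecLin_mul]
    exact LinearMap.range_comp_le_range _ _
  have key : ∀ j, LinearMap.range ((A' ^ j * B').mulVecLin) ≤ S j := by
    intro j
    induction j with
    | zero => simpa using hB'le
    | succ j ih =>
      have hstep : Submodule.map A'.mulVecLin (S j) ≤ S (j + 1) := by
        rw [hS]
        simp only [Submodule.map_iSup]
        refine iSup₂_le fun i hi => ?_
        rw [← LinearMap.range_comp, ← Matrix.mulVecLin_mul]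
        have : A' * (A ^ i * B) = A ^ (i + 1) * B + B * (M * (A ^ i * B)) := by
          rw [hA']; simp [Matrix.add_mul, Matrix.mul_assoc, pow_succ']
        rw [this, Matrix.mulVecLin_add]
        have hradd : ∀ (f g : (Fin m → ℂ) →ₗ[ℂ] (Fin n → ℂ)),
            LinearMap.range (f + g) ≤ LinearMap.range f ⊔ LinearMap.range g := by
          rintro f g - ⟨x, rfl⟩
          exact Submodule.add_mem_sup (LinearMap.mem_range_self f x)
            (LinearMap.mem_range_self g x)
        refine le_trans (hradd _ _) (sup_le ?_ ?_)
        · refine le_iSup₂_of_le (i + 1) ?_ le_rfl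
          simp only [Finset.mem_range] at hi ⊢; omega
        · refine le_trans ?_ (le_iSup₂_of_le 0 (by simp) le_rfl)
          simp only [pow_zero, Matrix.one_mul, Matrix.mulVecLin_mul]
          exact LinearMap.range_comp_le_range (M.mulVecLin ∘ₗ (A ^ i).mulVecLin ∘ₗ B.mulVecLin) B.mulVecLin
      calc LinearMap.range ((A' ^ (j + 1) * B').mulVecLin)
          = Submodule.map A'.mulVecLin (LinearMap.range ((A' ^ j * B').mulVecLin)) := by
            have h2 : A' ^ (j + 1) * B' = A' * (A' ^ j * B') := by
              rw [pow_succ', Matrix.mul_assoc]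
            rw [h2, Matrix.mulVecLin_mul, LinearMap.range_comp]
        _ ≤ Submodule.map A'.mulVecLin (S j) := Submodule.map_mono ih
        _ ≤ S (j + 1) := hstep
  refine iSup₂_le fun j hj => le_trans (key j) (hmono ?_)
  simp only [Finset.mem_range] at hj; omega

theorem stmt_16 (n m : ℕ)
    (A : Matrix (Fin n) (Fin n) ℂ) (B : Matrix (Fin n) (Fin m) ℂ)
    (C : Matrix (Fin m) (Fin n) ℂ) (D : Matrix (Fin m) (Fin m) ℂ)
    (hD : IsUnit D) :
    (∀ N : ℕ,
      (⨆ j ∈ Finset.range (N + 1),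
          LinearMap.range (((A - B * D⁻¹ * C) ^ j * (B * D⁻¹)).mulVecLin)) =
        ⨆ j ∈ Finset.range (N + 1), LinearMap.range ((A ^ j * B).mulVecLin)) ∧
    ((⨆ j ∈ Finset.range n, LinearMap.range ((A ^ j * B).mulVecLin)) = ⊤ ↔
      (⨆ j ∈ Finset.range n,
        LinearMap.range (((A - B * D⁻¹ * C) ^ j * (B * D⁻¹)).mulVecLin)) = ⊤) := by
  have hDdet : IsUnit D.det := (Matrix.isUnit_iff_isUnit_det D).mp hD
  have h1 : ∀ N : ℕ,
      (⨆ j ∈ Finset.range (N + 1),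
          LinearMap.range (((A - B * D⁻¹ * C) ^ j * (B * D⁻¹)).mulVecLin)) =
        ⨆ j ∈ Finset.range (N + 1), LinearMap.range ((A ^ j * B).mulVecLin) := by
    intro N
    apply le_antisymm
    · exact aux_le n m A (A - B * D⁻¹ * C) B (B * D⁻¹) (-(D⁻¹ * C)) D⁻¹
        (by rw [Matrix.mul_neg, ← Matrix.mul_assoc, sub_eq_add_neg]) rfl N
    · exact aux_le n m (A - B * D⁻¹ * C) A (B * D⁻¹) B C D
        (by abel) (by rw [Matrix.nonsing_inv_mul_cancel_right _ _ hDdet]) N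
  refine ⟨h1, ?_⟩
  cases n with
  | zero => simp
  | succ N => rw [h1 N]
end
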